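/- Let X⋆ ∈ ℝ^{n1×n2} have rank r with compact SVD X⋆ = V⋆Σ⋆W⋆ᵀ, let X_t ∈ ℝ^{n1×n2} have rank r with compact SVD X_t = V_tΣ_tW_tᵀ, and let X' ∈ ℝ^{n1×n2} have rank r. Assume max{‖V_{⋆,⊥}ᵀV_t‖, ‖W_{⋆,⊥}ᵀW_t‖} ≤ 1/8, ‖X_t − X⋆‖ ≤ σ_min(X⋆)/80, and ‖X_t − X'‖_F ≤ σ_min(X⋆)/80. Then ‖X_t − X'‖_F ≤ (5/4)·(‖V⋆ᵀ(X_t − X')‖_F + ‖(X_t − X')W⋆‖_F) and ‖V_{⋆,⊥}ᵀ(X_t − X')W_{⋆,⊥}‖_F ≤ (1/4)·(‖V⋆ᵀ(X_t − X')‖_F + ‖(X_t − X')W⋆‖_F). -/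

import Mathlib

open Matrix MeasureTheory ProbabilityTheory
open scoped BigOperators

noncomputable section

/-- Frobenius inner product `⟨A, B⟩ = trace (Aᵀ * B)`. -/
def frobInner {n1 n2 : ℕ} (A B : Matrix (Fin n1) (Fin n2) ℝ) : ℝ :=
  Matrix.trace (Aᵀ * B)

/-- Frobenius norm of a matrix. -/
def frobNorm {n1 n2 : ℕ} (A : Matrix (Fin n1) (Fin n2) ℝ) : ℝ :=
  Real.sqrt (∑ i, ∑ j, A i j ^ 2)

/-- Spectral (ℓ²-operator) norm of a matrix. -/
def specNorm {n1 n2 : ℕ} (A : Matrix (Fin n1) (Fin n2) ℝ) : ℝ :=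
  ‖LinearMap.toContinuousLinearMap (Matrix.toEuclideanLin A)‖

/-- Euclidean norm of a vector in ℝ^m. -/
def vecNorm {m : ℕ} (v : Fin m → ℝ) : ℝ :=
  Real.sqrt (∑ i, v i ^ 2)

/-- Smallest nonzero singular value of a matrix: the singular values of `X` are the
square roots of the eigenvalues of `Xᴴ * X`. -/
def sigmaMin {n1 n2 : ℕ} (X : Matrix (Fin n1) (Fin n2) ℝ) : ℝ :=
  sInf {s : ℝ | 0 < s ∧ ∃ i : Fin n2,
    s ^ 2 = (show (Xᵀ * X).IsHermitian by
      simpa using Matrix.isHermitian_conjTranspose_mul_self X).eigenvalues i}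

/-- The measurement operator `𝒜(X) i = (1/√m) ⟨A i, X⟩`. -/
def measOp {n1 n2 m : ℕ} (A : Fin m → Matrix (Fin n1) (Fin n2) ℝ)
    (X : Matrix (Fin n1) (Fin n2) ℝ) : Fin m → ℝ :=
  fun i => (Real.sqrt m)⁻¹ * frobInner (A i) X

/-- The adjoint `𝒜*(u) = (1/√m) ∑ i, u i • A i`. -/
def measAdj {n1 n2 m : ℕ} (A : Fin m → Matrix (Fin n1) (Fin n2) ℝ)
    (u : Fin m → ℝ) : Matrix (Fin n1) (Fin n2) ℝ :=
  (Real.sqrt m)⁻¹ • ∑ i, u i • A i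

/-- The composite operator `𝒜*𝒜`. -/
def opAA {n1 n2 m : ℕ} (A : Fin m → Matrix (Fin n1) (Fin n2) ℝ)
    (X : Matrix (Fin n1) (Fin n2) ℝ) : Matrix (Fin n1) (Fin n2) ℝ :=
  measAdj A (measOp A X)

/-- Rank-`k` restricted isometry property with constant `δ`. -/
def HasRIP {n1 n2 m : ℕ} (A : Fin m → Matrix (Fin n1) (Fin n2) ℝ) (k : ℕ) (δ : ℝ) : Prop :=
  ∀ Z : Matrix (Fin n1) (Fin n2) ℝ, Z.rank ≤ k →
    (1 - δ) * frobNorm Z ^ 2 ≤ vecNorm (measOp A Z) ^ 2 ∧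
      vecNorm (measOp A Z) ^ 2 ≤ (1 + δ) * frobNorm Z ^ 2

/-- Compact SVD: `X = V * S * Wᵀ`, `V, W` with orthonormal columns, `S` diagonal with
positive diagonal entries. -/
def IsCompactSVD {n1 n2 r : ℕ} (X : Matrix (Fin n1) (Fin n2) ℝ)
    (V : Matrix (Fin n1) (Fin r) ℝ) (S : Matrix (Fin r) (Fin r) ℝ)
    (W : Matrix (Fin n2) (Fin r) ℝ) : Prop :=
  X = V * S * Wᵀ ∧ Vᵀ * V = 1 ∧ Wᵀ * W = 1 ∧
    (∀ i j, i ≠ j → S i j = 0) ∧ (∀ i, 0 < S i i)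

/-- `Vp` is a matrix whose columns form an orthonormal basis of the orthogonal
complement of the column space of `V` (which has orthonormal columns). -/
def IsOrthComplement {n r : ℕ} (V : Matrix (Fin n) (Fin r) ℝ)
    (Vp : Matrix (Fin n) (Fin (n - r)) ℝ) : Prop :=
  Vpᵀ * Vp = 1 ∧ Vᵀ * Vp = 0

end

/-!
Write `Δ = Xt - X'` and compress a matrix `T` to the blocks `A = V⋆ᵀ T W⋆`, `B = V⋆ᵀ T W⋆⊥`,
`C = V⋆⊥ᵀ T W⋆`. For `T` close to `X⋆` in operator norm, `A` is a small perturbation of `Σ⋆`,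
hence invertible with `‖A⁻¹‖ ≤ (σ_min - ‖T - X⋆‖)⁻¹`, while `B` and `C` are bounded by
`‖T - X⋆‖` because the corresponding blocks of `X⋆` vanish. If moreover `rank T ≤ r`, the
column space of `T` is already spanned by `T W⋆`, which forces `V⋆⊥ᵀ T W⋆⊥ = C A⁻¹ B`.
Applying this to `Xt` and to `X'` and telescoping the difference of the two products bounds
`‖V⋆⊥ᵀ Δ W⋆⊥‖_F` by tiny multiples of `‖V⋆ᵀ Δ‖_F` and `‖Δ W⋆‖_F`; the bound on `‖Δ‖_F` then
follows from `‖Δ‖_F² = ‖V⋆ᵀ Δ‖_F² + ‖V⋆⊥ᵀ Δ W⋆‖_F² + ‖V⋆⊥ᵀ Δ W⋆⊥‖_F²`.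
-/

open Matrix

section Norms

variable {l m n : ℕ}

lemma vecNorm_nonneg (v : Fin m → ℝ) : 0 ≤ vecNorm v := Real.sqrt_nonneg _

lemma vecNorm_eq_norm (v : Fin m → ℝ) : vecNorm v = ‖WithLp.toLp 2 v‖ := by
  simp [vecNorm, EuclideanSpace.norm_eq]

lemma vecNorm_sq (v : Fin m → ℝ) : vecNorm v ^ 2 = v ⬝ᵥ v := by
  rw [vecNorm, Real.sq_sqrt (by positivity)]
  simp [dotProduct, sq]

lemma vecNorm_eq_zero {v : Fin m → ℝ} : vecNorm v = 0 ↔ v = 0 := by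
  rw [vecNorm_eq_norm, norm_eq_zero, ← WithLp.toLp_zero 2, (WithLp.toLp_injective 2).eq_iff]

lemma vecNorm_sub_le (u v : Fin m → ℝ) : vecNorm (u - v) ≤ vecNorm u + vecNorm v := by
  simpa only [vecNorm_eq_norm, WithLp.toLp_sub] using norm_sub_le _ _

lemma vecNorm_mulVec_le (A : Matrix (Fin m) (Fin n) ℝ) (x : Fin n → ℝ) :
    vecNorm (A *ᵥ x) ≤ specNorm A * vecNorm x := by
  simpa [vecNorm_eq_norm, specNorm] using
    (LinearMap.toContinuousLinearMap (toEuclideanLin A)).le_opNorm (WithLp.toLp 2 x)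

lemma specNorm_le_of_forall_vecNorm_mulVec_le (A : Matrix (Fin m) (Fin n) ℝ) {c : ℝ}
    (hc : 0 ≤ c) (h : ∀ x, vecNorm (A *ᵥ x) ≤ c * vecNorm x) : specNorm A ≤ c :=
  ContinuousLinearMap.opNorm_le_bound _ hc fun x => by
    have hx := h x.ofLp
    rwa [vecNorm_eq_norm, vecNorm_eq_norm] at hx

section L2Operator

open scoped Matrix.Norms.L2Operator

lemma specNorm_eq_l2_opNorm (A : Matrix (Fin m) (Fin n) ℝ) : specNorm A = ‖A‖ := rfl

lemma specNorm_nonneg (A : Matrix (Fin m) (Fin n) ℝ) : 0 ≤ specNorm A := norm_nonneg _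

lemma specNorm_mul_le (A : Matrix (Fin l) (Fin m) ℝ) (B : Matrix (Fin m) (Fin n) ℝ) :
    specNorm (A * B) ≤ specNorm A * specNorm B :=
  l2_opNorm_mul A B

lemma specNorm_sub_le (A B : Matrix (Fin m) (Fin n) ℝ) :
    specNorm (A - B) ≤ specNorm A + specNorm B :=
  norm_sub_le A B

lemma specNorm_transpose (A : Matrix (Fin m) (Fin n) ℝ) : specNorm Aᵀ = specNorm A := by
  simpa [specNorm_eq_l2_opNorm] using l2_opNorm_conjTranspose A

end L2Operator

section Frobenius

attribute [local instance] Matrix.frobeniusNormedAddCommGroup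

lemma frobNorm_eq_frobenius_norm (A : Matrix (Fin m) (Fin n) ℝ) : frobNorm A = ‖A‖ := by
  simp [frobNorm, frobenius_norm_def, Real.sqrt_eq_rpow]

lemma frobNorm_nonneg (A : Matrix (Fin m) (Fin n) ℝ) : 0 ≤ frobNorm A := Real.sqrt_nonneg _

lemma frobNorm_add_le (A B : Matrix (Fin m) (Fin n) ℝ) :
    frobNorm (A + B) ≤ frobNorm A + frobNorm B := by
  simpa only [frobNorm_eq_frobenius_norm] using norm_add_le A B

lemma frobNorm_sub_comm (A B : Matrix (Fin m) (Fin n) ℝ) : frobNorm (A - B) = frobNorm (B - A) := by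
  simpa only [frobNorm_eq_frobenius_norm] using norm_sub_rev A B

lemma frobNorm_transpose (A : Matrix (Fin m) (Fin n) ℝ) : frobNorm Aᵀ = frobNorm A := by
  simpa only [frobNorm_eq_frobenius_norm] using frobenius_norm_transpose A

end Frobenius

lemma frobNorm_sq_eq_sum_col (A : Matrix (Fin m) (Fin n) ℝ) :
    frobNorm A ^ 2 = ∑ j, vecNorm (Aᵀ j) ^ 2 := by
  simp only [frobNorm, vecNorm]
  rw [Real.sq_sqrt (by positivity), Finset.sum_comm]
  exact Finset.sum_congr rfl fun j _ => (Real.sq_sqrt (by positivity)).symm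

lemma transpose_mul_apply_eq_mulVec (A : Matrix (Fin l) (Fin m) ℝ) (B : Matrix (Fin m) (Fin n) ℝ)
    (j : Fin n) : (A * B)ᵀ j = A *ᵥ Bᵀ j := by
  ext i
  simp [mul_apply, mulVec, dotProduct]

lemma frobNorm_mul_le_specNorm_mul (A : Matrix (Fin l) (Fin m) ℝ) (B : Matrix (Fin m) (Fin n) ℝ) :
    frobNorm (A * B) ≤ specNorm A * frobNorm B := by
  rw [← sq_le_sq₀ (frobNorm_nonneg _) (mul_nonneg (specNorm_nonneg A) (frobNorm_nonneg B)),
    mul_pow, frobNorm_sq_eq_sum_col, frobNorm_sq_eq_sum_col, Finset.mul_sum]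
  refine Finset.sum_le_sum fun j _ => ?_
  rw [transpose_mul_apply_eq_mulVec, ← mul_pow]
  exact pow_le_pow_left₀ (vecNorm_nonneg _) (vecNorm_mulVec_le A _) 2

lemma frobNorm_mul_le_mul_specNorm (A : Matrix (Fin l) (Fin m) ℝ) (B : Matrix (Fin m) (Fin n) ℝ) :
    frobNorm (A * B) ≤ frobNorm A * specNorm B := by
  rw [← frobNorm_transpose, transpose_mul, mul_comm, ← specNorm_transpose, ← frobNorm_transpose A]
  exact frobNorm_mul_le_specNorm_mul Bᵀ Aᵀ

lemma specNorm_le_frobNorm (A : Matrix (Fin m) (Fin n) ℝ) : specNorm A ≤ frobNorm A := by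
  refine specNorm_le_of_forall_vecNorm_mulVec_le A (frobNorm_nonneg A) fun x => ?_
  rw [← sq_le_sq₀ (vecNorm_nonneg _) (mul_nonneg (frobNorm_nonneg A) (vecNorm_nonneg x)),
    mul_pow, frobNorm, Real.sq_sqrt (by positivity), vecNorm, vecNorm,
    Real.sq_sqrt (by positivity), Real.sq_sqrt (by positivity), Finset.sum_mul]
  exact Finset.sum_le_sum fun i _ => Finset.sum_mul_sq_le_sq_mul_sq Finset.univ (A i) x

variable {A : Matrix (Fin l) (Fin m) ℝ} {B : Matrix (Fin m) (Fin n) ℝ} {a b : ℝ}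

lemma specNorm_mul_le_of_le (hA : specNorm A ≤ a) (hB : specNorm B ≤ b) :
    specNorm (A * B) ≤ a * b :=
  (specNorm_mul_le A B).trans
    (mul_le_mul hA hB (specNorm_nonneg B) ((specNorm_nonneg A).trans hA))

lemma frobNorm_mul_le_of_specNorm_le (hA : specNorm A ≤ a) (hB : frobNorm B ≤ b) :
    frobNorm (A * B) ≤ a * b :=
  (frobNorm_mul_le_specNorm_mul A B).trans
    (mul_le_mul hA hB (frobNorm_nonneg B) ((specNorm_nonneg A).trans hA))

lemma frobNorm_mul_le_of_le_specNorm (hA : frobNorm A ≤ a) (hB : specNorm B ≤ b) :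
    frobNorm (A * B) ≤ a * b :=
  (frobNorm_mul_le_mul_specNorm A B).trans
    (mul_le_mul hA hB (specNorm_nonneg B) ((frobNorm_nonneg A).trans hA))

end Norms

section Orthonormal

variable {l m n k r : ℕ}

lemma mulVec_dotProduct_mulVec_self (A : Matrix (Fin m) (Fin n) ℝ) (x : Fin n → ℝ) :
    (A *ᵥ x) ⬝ᵥ (A *ᵥ x) = ((Aᵀ * A) *ᵥ x) ⬝ᵥ x := by
  rw [dotProduct_comm, dotProduct_mulVec, ← mulVec_transpose, mulVec_mulVec]

lemma vecNorm_mulVec_of_transpose_mul_self {V : Matrix (Fin m) (Fin n) ℝ} (hV : Vᵀ * V = 1)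
    (x : Fin n → ℝ) : vecNorm (V *ᵥ x) = vecNorm x := by
  rw [← sq_eq_sq₀ (vecNorm_nonneg _) (vecNorm_nonneg _), vecNorm_sq, vecNorm_sq,
    mulVec_dotProduct_mulVec_self, hV, one_mulVec]

lemma specNorm_le_one_of_transpose_mul_self {V : Matrix (Fin m) (Fin n) ℝ} (hV : Vᵀ * V = 1) :
    specNorm V ≤ 1 :=
  specNorm_le_of_forall_vecNorm_mulVec_le V zero_le_one fun x => by
    rw [vecNorm_mulVec_of_transpose_mul_self hV, one_mul]

lemma specNorm_transpose_mul_mul_le {P : Matrix (Fin m) (Fin l) ℝ} {Q : Matrix (Fin n) (Fin k) ℝ}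
    (hP : Pᵀ * P = 1) (hQ : Qᵀ * Q = 1) (M : Matrix (Fin m) (Fin n) ℝ) :
    specNorm (Pᵀ * M * Q) ≤ specNorm M := by
  simpa using specNorm_mul_le_of_le
    (specNorm_mul_le_of_le ((specNorm_transpose P).trans_le
      (specNorm_le_one_of_transpose_mul_self hP)) le_rfl)
    (specNorm_le_one_of_transpose_mul_self hQ)

lemma frobNorm_transpose_mul_le {P : Matrix (Fin m) (Fin l) ℝ} (hP : Pᵀ * P = 1)
    (M : Matrix (Fin m) (Fin n) ℝ) : frobNorm (Pᵀ * M) ≤ frobNorm M := by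
  simpa using frobNorm_mul_le_of_specNorm_le
    ((specNorm_transpose P).trans_le (specNorm_le_one_of_transpose_mul_self hP)) le_rfl

lemma frobNorm_mul_le_of_transpose_mul_self {Q : Matrix (Fin n) (Fin k) ℝ} (hQ : Qᵀ * Q = 1)
    (M : Matrix (Fin m) (Fin n) ℝ) : frobNorm (M * Q) ≤ frobNorm M := by
  simpa using frobNorm_mul_le_of_le_specNorm le_rfl (specNorm_le_one_of_transpose_mul_self hQ)

lemma vecNorm_transpose_mulVec_sq_add_sq {Q : Matrix (Fin m) (Fin n) ℝ}
    {Qp : Matrix (Fin m) (Fin k) ℝ} (hQ : Q * Qᵀ + Qp * Qpᵀ = 1) (x : Fin m → ℝ) :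
    vecNorm (Qᵀ *ᵥ x) ^ 2 + vecNorm (Qpᵀ *ᵥ x) ^ 2 = vecNorm x ^ 2 := by
  simp only [vecNorm_sq, mulVec_dotProduct_mulVec_self, transpose_transpose, ← add_dotProduct,
    ← add_mulVec, hQ, one_mulVec]

lemma frobNorm_transpose_mul_sq_add_sq {Q : Matrix (Fin m) (Fin n) ℝ}
    {Qp : Matrix (Fin m) (Fin k) ℝ} (hQ : Q * Qᵀ + Qp * Qpᵀ = 1) (M : Matrix (Fin m) (Fin l) ℝ) :
    frobNorm (Qᵀ * M) ^ 2 + frobNorm (Qpᵀ * M) ^ 2 = frobNorm M ^ 2 := by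
  simp only [frobNorm_sq_eq_sum_col, transpose_mul_apply_eq_mulVec, ← Finset.sum_add_distrib,
    vecNorm_transpose_mulVec_sq_add_sq hQ]

lemma frobNorm_mul_sq_add_sq {Q : Matrix (Fin m) (Fin n) ℝ}
    {Qp : Matrix (Fin m) (Fin k) ℝ} (hQ : Q * Qᵀ + Qp * Qpᵀ = 1) (M : Matrix (Fin l) (Fin m) ℝ) :
    frobNorm (M * Q) ^ 2 + frobNorm (M * Qp) ^ 2 = frobNorm M ^ 2 := by
  have h := frobNorm_transpose_mul_sq_add_sq hQ Mᵀ
  rwa [← transpose_mul, ← transpose_mul, frobNorm_transpose, frobNorm_transpose,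
    frobNorm_transpose] at h

namespace IsOrthComplement

variable {V : Matrix (Fin n) (Fin r) ℝ} {Vp : Matrix (Fin n) (Fin (n - r)) ℝ}

lemma transpose_mul_eq_zero (h : IsOrthComplement V Vp) : Vpᵀ * V = 0 := by
  simpa using congrArg transpose h.2

lemma mul_transpose_add_mul_transpose (h : IsOrthComplement V Vp) (hV : Vᵀ * V = 1) :
    V * Vᵀ + Vp * Vpᵀ = 1 := by
  have hr : r ≤ n := by simpa [hV] using (rank_mul_le_right Vᵀ V).trans (rank_le_height V)
  have e : Fin n ≃ Fin r ⊕ Fin (n - r) :=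
    (finCongr (Nat.add_sub_cancel' hr).symm).trans finSumFinEquiv.symm
  have hrows : fromRows Vᵀ Vpᵀ * fromCols V Vp = 1 := by
    rw [fromRows_mul_fromCols, hV, h.1, h.2, h.transpose_mul_eq_zero, fromBlocks_one]
  simpa [fromCols_mul_fromRows] using (fromCols_mul_fromRows_eq_one_comm e V Vp Vᵀ Vpᵀ).2 hrows

end IsOrthComplement

end Orthonormal

section InverseBound

variable {r : ℕ}

lemma le_vecNorm_diagonal_mulVec {d : Fin r → ℝ} {s : ℝ} (hs : 0 ≤ s) (hd : ∀ i, s ≤ d i)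
    (x : Fin r → ℝ) : s * vecNorm x ≤ vecNorm (diagonal d *ᵥ x) := by
  rw [← sq_le_sq₀ (mul_nonneg hs (vecNorm_nonneg x)) (vecNorm_nonneg _), mul_pow, vecNorm_sq,
    vecNorm_sq, dotProduct, dotProduct, Finset.mul_sum]
  refine Finset.sum_le_sum fun i _ => ?_
  rw [mulVec_diagonal, ← sq, ← sq, mul_pow]
  exact mul_le_mul_of_nonneg_right (pow_le_pow_left₀ hs (hd i) 2) (sq_nonneg _)

variable {A : Matrix (Fin r) (Fin r) ℝ} {c : ℝ}

lemma isUnit_det_of_le_vecNorm_mulVec (hc : 0 < c) (h : ∀ x, c * vecNorm x ≤ vecNorm (A *ᵥ x)) :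
    IsUnit A.det := by
  refine isUnit_iff_ne_zero.2 fun hdet => ?_
  obtain ⟨v, hv, hAv⟩ := exists_mulVec_eq_zero_iff.2 hdet
  have hle := h v
  rw [hAv, vecNorm_eq_zero.2 rfl] at hle
  exact hv (vecNorm_eq_zero.1 (le_antisymm (nonpos_of_mul_nonpos_right hle hc) (vecNorm_nonneg v)))

lemma specNorm_inv_le_of_le_vecNorm_mulVec (hc : 0 < c)
    (h : ∀ x, c * vecNorm x ≤ vecNorm (A *ᵥ x)) : specNorm A⁻¹ ≤ c⁻¹ := by
  refine specNorm_le_of_forall_vecNorm_mulVec_le _ (inv_nonneg.2 hc.le) fun y => ?_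
  have hy := h (A⁻¹ *ᵥ y)
  rw [mulVec_mulVec, mul_nonsing_inv A (isUnit_det_of_le_vecNorm_mulVec hc h), one_mulVec] at hy
  rwa [le_inv_mul_iff₀ hc]

end InverseBound

namespace Matrix

variable {K m n ι : Type*} [Field K] [Fintype n] [Fintype ι]

lemma exists_eq_mul_of_range_le {A : Matrix m ι K} {B : Matrix m n K}
    (h : LinearMap.range B.mulVecLin ≤ LinearMap.range A.mulVecLin) :
    ∃ L : Matrix ι n K, B = A * L := by
  classical
  have hcol : ∀ j, ∃ w, A *ᵥ w = Bᵀ j := fun j =>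
    h ⟨Pi.single j 1, by ext; simp⟩
  choose w hw using hcol
  refine ⟨(of w)ᵀ, ?_⟩
  ext i j
  have hij := congrFun (hw j) i
  simp only [mulVec, dotProduct, transpose_apply] at hij
  simp [mul_apply, ← hij]

lemma eq_mul_mul_nonsing_inv_mul_of_rank_le [Fintype m] [DecidableEq ι] (T : Matrix m n K)
    (P : Matrix ι m K) (Q : Matrix n ι K) (hT : T.rank ≤ Fintype.card ι)
    (hPTQ : IsUnit (P * T * Q).det) :
    T = T * Q * (P * T * Q)⁻¹ * (P * T) := by
  have hsub : LinearMap.range (T * Q).mulVecLin ≤ LinearMap.range T.mulVecLin := by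
    rw [mulVecLin_mul]
    exact LinearMap.range_comp_le_range _ _
  have hTQ : Fintype.card ι ≤ (T * Q).rank := by
    rw [← rank_of_isUnit _ ((isUnit_iff_isUnit_det _).2 hPTQ), Matrix.mul_assoc]
    exact rank_mul_le_right _ _
  obtain ⟨L, hL⟩ := exists_eq_mul_of_range_le
    (Submodule.eq_of_le_of_finrank_le hsub (hT.trans hTQ)).ge
  have hPT : P * T = P * T * Q * L := by
    conv_lhs => rw [hL]
    simp only [Matrix.mul_assoc]
  have hLeq : (P * T * Q)⁻¹ * (P * T) = L :=
    calc (P * T * Q)⁻¹ * (P * T) = (P * T * Q)⁻¹ * (P * T * Q * L) := congrArg _ hPT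
      _ = L := by rw [← Matrix.mul_assoc, nonsing_inv_mul _ hPTQ, Matrix.one_mul]
  rw [Matrix.mul_assoc (T * Q), hLeq, ← hL]

lemma mul_mul_eq_of_rank_le [Fintype m] [DecidableEq ι] {l k : Type*}
    (T : Matrix m n K) (P : Matrix ι m K) (Q : Matrix n ι K) (P' : Matrix l m K)
    (Q' : Matrix n k K) (hT : T.rank ≤ Fintype.card ι) (hPTQ : IsUnit (P * T * Q).det) :
    P' * T * Q' = P' * T * Q * (P * T * Q)⁻¹ * (P * T * Q') := by
  conv_lhs => rw [eq_mul_mul_nonsing_inv_mul_of_rank_le T P Q hT hPTQ]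
  simp only [Matrix.mul_assoc]

end Matrix

lemma frobNorm_mul_inv_mul_sub_mul_inv_mul_le {l r k : ℕ} {C C' : Matrix (Fin l) (Fin r) ℝ}
    {A A' : Matrix (Fin r) (Fin r) ℝ} {B B' : Matrix (Fin r) (Fin k) ℝ}
    (hA : IsUnit A.det) (hA' : IsUnit A'.det) {γ α α' β β' : ℝ} (hC : specNorm C ≤ γ)
    (hAinv : specNorm A⁻¹ ≤ α) (hA'inv : specNorm A'⁻¹ ≤ α') (hB : specNorm B ≤ β)
    (hB' : specNorm B' ≤ β') :
    frobNorm (C * A⁻¹ * B - C' * A'⁻¹ * B') ≤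
      γ * (α * (frobNorm (A - A') * (α' * β))) + γ * (α' * frobNorm (B - B')) +
        frobNorm (C - C') * (α' * β') := by
  have hsplit : C * A⁻¹ * B - C' * A'⁻¹ * B' =
      C * (A⁻¹ * ((A' - A) * (A'⁻¹ * B))) + C * (A'⁻¹ * (B - B')) + (C - C') * (A'⁻¹ * B') := by
    simp only [Matrix.mul_sub, Matrix.sub_mul, Matrix.mul_assoc,
      mul_nonsing_inv_cancel_left _ _ hA', nonsing_inv_mul_cancel_left _ _ hA]
    abel
  rw [hsplit, frobNorm_sub_comm A]
  refine (frobNorm_add_le _ _).trans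
    (add_le_add ((frobNorm_add_le _ _).trans (add_le_add ?_ ?_)) ?_)
  · exact frobNorm_mul_le_of_specNorm_le hC (frobNorm_mul_le_of_specNorm_le hAinv
      (frobNorm_mul_le_of_le_specNorm le_rfl (specNorm_mul_le_of_le hA'inv hB)))
  · exact frobNorm_mul_le_of_specNorm_le hC (frobNorm_mul_le_of_specNorm_le hA'inv le_rfl)
  · exact frobNorm_mul_le_of_le_specNorm le_rfl (specNorm_mul_le_of_le hA'inv hB')

lemma frobNorm_le_of_frobNorm_transpose_mul_mul_le {m n r k p q : ℕ}
    {V : Matrix (Fin m) (Fin r) ℝ} {Vp : Matrix (Fin m) (Fin p) ℝ}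
    {W : Matrix (Fin n) (Fin k) ℝ} {Wp : Matrix (Fin n) (Fin q) ℝ}
    (hV : V * Vᵀ + Vp * Vpᵀ = 1) (hW : W * Wᵀ + Wp * Wpᵀ = 1) {M : Matrix (Fin m) (Fin n) ℝ}
    (hM : frobNorm (Vpᵀ * M * Wp) ≤ 1 / 4 * (frobNorm (Vᵀ * M) + frobNorm (M * W))) :
    frobNorm M ≤ 5 / 4 * (frobNorm (Vᵀ * M) + frobNorm (M * W)) := by
  have hMW : frobNorm (Vpᵀ * M * W) ^ 2 ≤ frobNorm (M * W) ^ 2 := by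
    rw [Matrix.mul_assoc, ← frobNorm_transpose_mul_sq_add_sq hV (M * W)]
    exact le_add_of_nonneg_left (sq_nonneg _)
  have hMWp := pow_le_pow_left₀ (frobNorm_nonneg _) hM 2
  have ha := frobNorm_nonneg (Vᵀ * M)
  have hb := frobNorm_nonneg (M * W)
  rw [← sq_le_sq₀ (frobNorm_nonneg M) (by positivity)]
  calc frobNorm M ^ 2
      = frobNorm (Vᵀ * M) ^ 2 + frobNorm (Vpᵀ * M * W) ^ 2 + frobNorm (Vpᵀ * M * Wp) ^ 2 := by
        rw [add_assoc, frobNorm_mul_sq_add_sq hW, frobNorm_transpose_mul_sq_add_sq hV]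
    _ ≤ frobNorm (Vᵀ * M) ^ 2 + frobNorm (M * W) ^ 2 +
        (1 / 4 * (frobNorm (Vᵀ * M) + frobNorm (M * W))) ^ 2 := by gcongr
    _ ≤ (5 / 4 * (frobNorm (Vᵀ * M) + frobNorm (M * W))) ^ 2 := by nlinarith [mul_nonneg ha hb]

lemma sigmaMin_nonneg {m n : ℕ} (X : Matrix (Fin m) (Fin n) ℝ) : 0 ≤ sigmaMin X :=
  Real.sInf_nonneg fun _ hs => hs.1.le

namespace IsCompactSVD

variable {n1 n2 r : ℕ} {X : Matrix (Fin n1) (Fin n2) ℝ} {V : Matrix (Fin n1) (Fin r) ℝ}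
  {S : Matrix (Fin r) (Fin r) ℝ} {W : Matrix (Fin n2) (Fin r) ℝ}
  {Vp : Matrix (Fin n1) (Fin (n1 - r)) ℝ} {Wp : Matrix (Fin n2) (Fin (n2 - r)) ℝ}

lemma rank_le (h : IsCompactSVD X V S W) : X.rank ≤ r := by
  rw [h.1]
  exact (rank_mul_le_left _ _).trans ((rank_mul_le_left _ _).trans (rank_le_width V))

lemma transpose_mul_mul (h : IsCompactSVD X V S W) : Vᵀ * X * W = S := by
  obtain ⟨rfl, hV, hW, -, -⟩ := h
  simp only [Matrix.mul_assoc, hW, Matrix.mul_one, ← Matrix.mul_assoc Vᵀ V, hV, Matrix.one_mul]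

lemma eq_diagonal (h : IsCompactSVD X V S W) : S = diagonal S.diag :=
  (IsDiag.diagonal_diag h.2.2.2.1).symm

lemma sq_mem_spectrum (h : IsCompactSVD X V S W) (i : Fin r) :
    S i i ^ 2 ∈ spectrum ℝ (Xᵀ * X) := by
  have hXX : Xᵀ * X = W * diagonal (fun j => S j j ^ 2) * Wᵀ := by
    have hS := h.eq_diagonal
    obtain ⟨rfl, hV, -, -, -⟩ := h
    rw [hS]
    simp only [transpose_mul, transpose_transpose, diagonal_transpose, Matrix.mul_assoc]
    rw [← Matrix.mul_assoc Vᵀ V, hV, Matrix.one_mul, ← Matrix.mul_assoc (diagonal _),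
      diagonal_mul_diagonal]
    simp [sq]
  rw [← spectrum_toLin', ← Module.End.hasEigenvalue_iff_mem_spectrum]
  refine Module.End.hasEigenvalue_of_hasEigenvector (x := W *ᵥ Pi.single i 1) ⟨?_, ?_⟩
  · rw [Module.End.mem_eigenspace_iff, toLin'_apply, hXX, ← mulVec_mulVec, ← mulVec_mulVec,
      mulVec_mulVec _ Wᵀ, h.2.2.1, one_mulVec, diagonal_mulVec_single, ← mulVec_smul]
    congr 1
    ext j
    simp [Pi.single_apply]
  · intro h0
    have h1 := congrArg (Wᵀ *ᵥ ·) h0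
    simp only [mulVec_mulVec, h.2.2.1, one_mulVec, mulVec_zero] at h1
    simpa using congrFun h1 i

lemma sigmaMin_le (h : IsCompactSVD X V S W) (i : Fin r) : sigmaMin X ≤ S i i := by
  refine csInf_le ⟨0, fun _ hs => hs.1.le⟩ ⟨h.2.2.2.2 i, ?_⟩
  have hX : (Xᵀ * X).IsHermitian := by simpa using isHermitian_conjTranspose_mul_self X
  obtain ⟨j, hj⟩ := hX.spectrum_real_eq_range_eigenvalues ▸ h.sq_mem_spectrum i
  exact ⟨j, hj.symm⟩

variable (T : Matrix (Fin n1) (Fin n2) ℝ)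

lemma transpose_mul_mul_sub (h : IsCompactSVD X V S W) :
    Vᵀ * T * W - S = Vᵀ * (T - X) * W := by
  rw [Matrix.mul_sub, Matrix.sub_mul, h.transpose_mul_mul]

lemma transpose_mul_mul_orthComplement (h : IsCompactSVD X V S W) (hWp : IsOrthComplement W Wp) :
    Vᵀ * T * Wp = Vᵀ * (T - X) * Wp := by
  have hXWp : X * Wp = 0 := by rw [h.1, Matrix.mul_assoc, hWp.2, Matrix.mul_zero]
  rw [Matrix.mul_sub, Matrix.sub_mul, Matrix.mul_assoc _ X, hXWp, Matrix.mul_zero, sub_zero]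

lemma orthComplement_transpose_mul_mul (h : IsCompactSVD X V S W) (hVp : IsOrthComplement V Vp) :
    Vpᵀ * T * W = Vpᵀ * (T - X) * W := by
  have hVpX : Vpᵀ * X = 0 := by
    rw [h.1, ← Matrix.mul_assoc, ← Matrix.mul_assoc, hVp.transpose_mul_eq_zero, Matrix.zero_mul,
      Matrix.zero_mul]
  rw [Matrix.mul_sub, hVpX, sub_zero]

variable {T} {δ : ℝ}

lemma le_vecNorm_transpose_mul_mul_mulVec (h : IsCompactSVD X V S W)
    (hT : specNorm (T - X) ≤ δ) (x : Fin r → ℝ) :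
    (sigmaMin X - δ) * vecNorm x ≤ vecNorm ((Vᵀ * T * W) *ᵥ x) := by
  have hS : sigmaMin X * vecNorm x ≤ vecNorm (S *ᵥ x) := by
    rw [h.eq_diagonal]
    exact le_vecNorm_diagonal_mulVec (sigmaMin_nonneg X) h.sigmaMin_le x
  have hE : vecNorm ((Vᵀ * T * W - S) *ᵥ x) ≤ δ * vecNorm x := by
    refine (vecNorm_mulVec_le _ x).trans (mul_le_mul_of_nonneg_right ?_ (vecNorm_nonneg x))
    rw [h.transpose_mul_mul_sub]
    exact (specNorm_transpose_mul_mul_le h.2.1 h.2.2.1 _).trans hT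
  have hsplit : S *ᵥ x = (Vᵀ * T * W) *ᵥ x - (Vᵀ * T * W - S) *ᵥ x := by
    rw [sub_mulVec, sub_sub_cancel]
  have := vecNorm_sub_le ((Vᵀ * T * W) *ᵥ x) ((Vᵀ * T * W - S) *ᵥ x)
  rw [← hsplit] at this
  linarith

lemma isUnit_det_transpose_mul_mul (h : IsCompactSVD X V S W) (hδ : δ < sigmaMin X)
    (hT : specNorm (T - X) ≤ δ) : IsUnit (Vᵀ * T * W).det :=
  isUnit_det_of_le_vecNorm_mulVec (sub_pos.2 hδ) (h.le_vecNorm_transpose_mul_mul_mulVec hT)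

lemma specNorm_inv_transpose_mul_mul_le (h : IsCompactSVD X V S W) (hδ : δ < sigmaMin X)
    (hT : specNorm (T - X) ≤ δ) : specNorm (Vᵀ * T * W)⁻¹ ≤ (sigmaMin X - δ)⁻¹ :=
  specNorm_inv_le_of_le_vecNorm_mulVec (sub_pos.2 hδ) (h.le_vecNorm_transpose_mul_mul_mulVec hT)

lemma specNorm_transpose_mul_mul_orthComplement_le (h : IsCompactSVD X V S W)
    (hWp : IsOrthComplement W Wp) (hT : specNorm (T - X) ≤ δ) : specNorm (Vᵀ * T * Wp) ≤ δ := by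
  rw [h.transpose_mul_mul_orthComplement _ hWp]
  exact (specNorm_transpose_mul_mul_le h.2.1 hWp.1 _).trans hT

lemma specNorm_orthComplement_transpose_mul_mul_le (h : IsCompactSVD X V S W)
    (hVp : IsOrthComplement V Vp) (hT : specNorm (T - X) ≤ δ) : specNorm (Vpᵀ * T * W) ≤ δ := by
  rw [h.orthComplement_transpose_mul_mul _ hVp]
  exact (specNorm_transpose_mul_mul_le hVp.1 h.2.2.1 _).trans hT

lemma frobNorm_orthComplement_block_sub_le (h : IsCompactSVD X V S W)
    (hVp : IsOrthComplement V Vp) (hWp : IsOrthComplement W Wp)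
    {T₁ T₂ : Matrix (Fin n1) (Fin n2) ℝ} (hT₁ : T₁.rank ≤ r) (hT₂ : T₂.rank ≤ r) {δ₁ δ₂ : ℝ}
    (hδ₁ : δ₁ < sigmaMin X) (hδ₂ : δ₂ < sigmaMin X)
    (h₁ : specNorm (T₁ - X) ≤ δ₁) (h₂ : specNorm (T₂ - X) ≤ δ₂) :
    frobNorm (Vpᵀ * (T₁ - T₂) * Wp) ≤
      δ₁ * ((sigmaMin X - δ₁)⁻¹ * (frobNorm (Vᵀ * (T₁ - T₂) * W) * ((sigmaMin X - δ₂)⁻¹ * δ₁))) +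
        δ₁ * ((sigmaMin X - δ₂)⁻¹ * frobNorm (Vᵀ * (T₁ - T₂) * Wp)) +
        frobNorm (Vpᵀ * (T₁ - T₂) * W) * ((sigmaMin X - δ₂)⁻¹ * δ₂) := by
  have hu₁ := h.isUnit_det_transpose_mul_mul hδ₁ h₁
  have hu₂ := h.isUnit_det_transpose_mul_mul hδ₂ h₂
  have hblock : Vpᵀ * (T₁ - T₂) * Wp =
      Vpᵀ * T₁ * W * (Vᵀ * T₁ * W)⁻¹ * (Vᵀ * T₁ * Wp) -
        Vpᵀ * T₂ * W * (Vᵀ * T₂ * W)⁻¹ * (Vᵀ * T₂ * Wp) := by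
    rw [← mul_mul_eq_of_rank_le T₁ Vᵀ W Vpᵀ Wp (by simpa using hT₁) hu₁,
      ← mul_mul_eq_of_rank_le T₂ Vᵀ W Vpᵀ Wp (by simpa using hT₂) hu₂, Matrix.mul_sub,
      Matrix.sub_mul]
  have hdiff : ∀ {k l : ℕ} (P : Matrix (Fin n1) (Fin k) ℝ) (Q : Matrix (Fin n2) (Fin l) ℝ),
      Pᵀ * T₁ * Q - Pᵀ * T₂ * Q = Pᵀ * (T₁ - T₂) * Q := fun _ _ => by
    rw [Matrix.mul_sub, Matrix.sub_mul]
  rw [hblock, ← hdiff V W, ← hdiff V Wp, ← hdiff Vp W]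
  exact frobNorm_mul_inv_mul_sub_mul_inv_mul_le hu₁ hu₂
    (h.specNorm_orthComplement_transpose_mul_mul_le hVp h₁)
    (h.specNorm_inv_transpose_mul_mul_le hδ₁ h₁) (h.specNorm_inv_transpose_mul_mul_le hδ₂ h₂)
    (h.specNorm_transpose_mul_mul_orthComplement_le hWp h₁)
    (h.specNorm_transpose_mul_mul_orthComplement_le hWp h₂)

lemma frobNorm_orthComplement_block_sub_le_quarter (h : IsCompactSVD X V S W)
    (hVp : IsOrthComplement V Vp) (hWp : IsOrthComplement W Wp)
    {T₁ T₂ : Matrix (Fin n1) (Fin n2) ℝ} (hT₁ : T₁.rank ≤ r) (hT₂ : T₂.rank ≤ r)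
    (hs : 0 < sigmaMin X) (h₁ : specNorm (T₁ - X) ≤ sigmaMin X / 80)
    (h₂ : specNorm (T₂ - X) ≤ sigmaMin X / 40) :
    frobNorm (Vpᵀ * (T₁ - T₂) * Wp) ≤
      1 / 4 * (frobNorm (Vᵀ * (T₁ - T₂)) + frobNorm ((T₁ - T₂) * W)) := by
  have key := h.frobNorm_orthComplement_block_sub_le hVp hWp hT₁ hT₂ (by linarith)
    (by linarith) h₁ h₂
  set s := sigmaMin X
  have e₁ : s / 80 * ((s - s / 80)⁻¹ * (frobNorm (Vᵀ * (T₁ - T₂) * W) *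
      ((s - s / 40)⁻¹ * (s / 80)))) = frobNorm (Vᵀ * (T₁ - T₂) * W) / 6162 := by
    field_simp
    ring
  have e₂ : s / 80 * ((s - s / 40)⁻¹ * frobNorm (Vᵀ * (T₁ - T₂) * Wp)) =
      frobNorm (Vᵀ * (T₁ - T₂) * Wp) / 78 := by
    field_simp
    ring
  have e₃ : (s - s / 40)⁻¹ * (s / 40) = 1 / 39 := by
    field_simp
    ring
  rw [e₁, e₂, e₃] at key
  have hF := frobNorm_mul_le_of_transpose_mul_self h.2.2.1 (Vᵀ * (T₁ - T₂))
  have hH := frobNorm_mul_le_of_transpose_mul_self hWp.1 (Vᵀ * (T₁ - T₂))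
  have hG := frobNorm_transpose_mul_le hVp.1 ((T₁ - T₂) * W)
  rw [← Matrix.mul_assoc] at hG
  linarith [frobNorm_nonneg (Vᵀ * (T₁ - T₂)), frobNorm_nonneg ((T₁ - T₂) * W)]

end IsCompactSVD

theorem statement5_general {n1 n2 r : ℕ}
    (Xstar Xt X' : Matrix (Fin n1) (Fin n2) ℝ)
    (Vs : Matrix (Fin n1) (Fin r) ℝ) (Ss : Matrix (Fin r) (Fin r) ℝ)
    (Ws : Matrix (Fin n2) (Fin r) ℝ) (hXstar : IsCompactSVD Xstar Vs Ss Ws)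
    (Vsp : Matrix (Fin n1) (Fin (n1 - r)) ℝ) (hVsp : IsOrthComplement Vs Vsp)
    (Wsp : Matrix (Fin n2) (Fin (n2 - r)) ℝ) (hWsp : IsOrthComplement Ws Wsp)
    (Vt : Matrix (Fin n1) (Fin r) ℝ) (St : Matrix (Fin r) (Fin r) ℝ)
    (Wt : Matrix (Fin n2) (Fin r) ℝ) (hXt : IsCompactSVD Xt Vt St Wt)
    (hX' : X'.rank = r)
    (hop : specNorm (Xt - Xstar) ≤ sigmaMin Xstar / 80)
    (hfrob : frobNorm (Xt - X') ≤ sigmaMin Xstar / 80) :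
    frobNorm (Xt - X') ≤
      5 / 4 * (frobNorm (Vsᵀ * (Xt - X')) + frobNorm ((Xt - X') * Ws)) ∧
    frobNorm (Vspᵀ * (Xt - X') * Wsp) ≤
      1 / 4 * (frobNorm (Vsᵀ * (Xt - X')) + frobNorm ((Xt - X') * Ws)) := by
  have hperp : frobNorm (Vspᵀ * (Xt - X') * Wsp) ≤
      1 / 4 * (frobNorm (Vsᵀ * (Xt - X')) + frobNorm ((Xt - X') * Ws)) := by
    rcases (sigmaMin_nonneg Xstar).eq_or_lt with hs | hs
    · -- `sigmaMin Xstar = sInf ∅ = 0` when `r = 0`; then `hfrob` reads `frobNorm (Xt - X') ≤ 0`.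
      have hperp_le : frobNorm (Vspᵀ * (Xt - X') * Wsp) ≤ frobNorm (Xt - X') :=
        (frobNorm_mul_le_of_transpose_mul_self hWsp.1 _).trans (frobNorm_transpose_mul_le hVsp.1 _)
      linarith [frobNorm_nonneg (Vsᵀ * (Xt - X')), frobNorm_nonneg ((Xt - X') * Ws)]
    · refine hXstar.frobNorm_orthComplement_block_sub_le_quarter hVsp hWsp hXt.rank_le hX'.le hs
        hop ?_
      calc specNorm (X' - Xstar) = specNorm ((Xt - Xstar) - (Xt - X')) := by
            rw [sub_sub_sub_cancel_left]
        _ ≤ sigmaMin Xstar / 80 + sigmaMin Xstar / 80 :=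
            (specNorm_sub_le _ _).trans (add_le_add hop ((specNorm_le_frobNorm _).trans hfrob))
        _ = sigmaMin Xstar / 40 := by ring
  exact ⟨frobNorm_le_of_frobNorm_transpose_mul_mul_le
    (hVsp.mul_transpose_add_mul_transpose hXstar.2.1)
    (hWsp.mul_transpose_add_mul_transpose hXstar.2.2.1) hperp, hperp⟩

/-- Frobenius-norm control of `X_t − X'` in terms of its projections
onto the column/row spaces of `X⋆`. -/
theorem statement5 {n1 n2 r : ℕ}
    (Xstar Xt X' : Matrix (Fin n1) (Fin n2) ℝ)
    (Vs : Matrix (Fin n1) (Fin r) ℝ) (Ss : Matrix (Fin r) (Fin r) ℝ)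
    (Ws : Matrix (Fin n2) (Fin r) ℝ) (hXstar : IsCompactSVD Xstar Vs Ss Ws)
    (Vsp : Matrix (Fin n1) (Fin (n1 - r)) ℝ) (hVsp : IsOrthComplement Vs Vsp)
    (Wsp : Matrix (Fin n2) (Fin (n2 - r)) ℝ) (hWsp : IsOrthComplement Ws Wsp)
    (Vt : Matrix (Fin n1) (Fin r) ℝ) (St : Matrix (Fin r) (Fin r) ℝ)
    (Wt : Matrix (Fin n2) (Fin r) ℝ) (hXt : IsCompactSVD Xt Vt St Wt)
    (hX' : X'.rank = r)
    (hproj : max (specNorm (Vspᵀ * Vt)) (specNorm (Wspᵀ * Wt)) ≤ 1 / 8)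
    (hop : specNorm (Xt - Xstar) ≤ sigmaMin Xstar / 80)
    (hfrob : frobNorm (Xt - X') ≤ sigmaMin Xstar / 80) :
    frobNorm (Xt - X') ≤
      5 / 4 * (frobNorm (Vsᵀ * (Xt - X')) + frobNorm ((Xt - X') * Ws)) ∧
    frobNorm (Vspᵀ * (Xt - X') * Wsp) ≤
      1 / 4 * (frobNorm (Vsᵀ * (Xt - X')) + frobNorm ((Xt - X') * Ws)) :=
  statement5_general Xstar Xt X' Vs Ss Ws hXstar Vsp hVsp Wsp hWsp Vt St Wt hXt hX' hop hfrob
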